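/- Let H ∈ F_2^{r×n} be such that T(H) is a tree in which every check node has degree at least 2. Then the rows of H are linearly independent over F_2. -/

import Mathlib

open Finset

/-- The Tanner graph of a binary matrix `H`: bit nodes are columns (`Sum.inl`),
check nodes are rows (`Sum.inr`), with an edge whenever the entry is 1. -/
def tanner {r n : ℕ} (H : Matrix (Fin r) (Fin n) (ZMod 2)) :
    SimpleGraph (Fin n ⊕ Fin r) where
  Adj v w :=
    (∃ i j, v = Sum.inl i ∧ w = Sum.inr j ∧ H j i = 1) ∨
    (∃ i j, v = Sum.inr j ∧ w = Sum.inl i ∧ H j i = 1)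
  symm := by
    constructor
    rintro v w (⟨i, j, h1, h2, h3⟩ | ⟨i, j, h1, h2, h3⟩)
    · exact Or.inr ⟨i, j, h2, h1, h3⟩
    · exact Or.inl ⟨i, j, h2, h1, h3⟩
  loopless := by
    constructor
    rintro v (⟨i, j, h1, h2, _⟩ | ⟨i, j, h1, h2, _⟩) <;> subst h1 <;> simp at h2

/-- Membership in the fundamental cone `K(H)` for integer vectors. -/
def inConeZ {r n : ℕ} (H : Matrix (Fin r) (Fin n) (ZMod 2)) (p : Fin n → ℤ) : Prop :=
  (∀ i, 0 ≤ p i) ∧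
  ∀ j i, (if H j i = 1 then p i else 0) ≤
    ∑ l ∈ Finset.univ.erase i, (if H j l = 1 then p l else 0)

/-- `H pᵀ ≡ 0 (mod 2)`. -/
def parityOK {r n : ℕ} (H : Matrix (Fin r) (Fin n) (ZMod 2)) (p : Fin n → ℤ) : Prop :=
  ∀ j, (∑ i, (if H j i = 1 then p i else 0)) % 2 = 0

/-- Graph-cover pseudocodeword, via the Koetter–Li–Vontobel–Walker characterization. -/
def isPseudo {r n : ℕ} (H : Matrix (Fin r) (Fin n) (ZMod 2)) (p : Fin n → ℤ) : Prop :=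
  inConeZ H p ∧ parityOK H p

/-- `p` is a finite nonnegative-integer combination of codewords of `C(H)`. -/
def isComb {r n : ℕ} (H : Matrix (Fin r) (Fin n) (ZMod 2)) (p : Fin n → ℤ) : Prop :=
  ∃ a : (Fin n → ZMod 2) → ℕ,
    ∀ i, p i =
      ∑ c : Fin n → ZMod 2,
        (if H.mulVec c = 0 then (a c : ℤ) * ((c i).val : ℤ) else 0)

/-- `H` is geometrically perfect. -/
def geomPerfect {r n : ℕ} (H : Matrix (Fin r) (Fin n) (ZMod 2)) : Prop :=
  ∀ p, isPseudo H p ↔ isComb H p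

/-!
A nontrivial dependency `∑ j, g j • H j = 0` singles out the checks with `g j ≠ 0` and the bits
they touch. Every such check has at least two such bits by hypothesis, and every such bit lies in
at least two such checks, since its column sum `∑ j, g j * H j i` vanishes. So these vertices
span a nonempty finite subgraph of `T(H)` of minimum degree two, whereas in a forest the end of a
longest path has at most one neighbour.
-/

namespace SimpleGraph

variable {V : Type*} {G : SimpleGraph V}

theorem IsAcyclic.exists_neighborSet_subsingleton [Finite V] [Nonempty V] (h : G.IsAcyclic) :
    ∃ v, (G.neighborSet v).Subsingleton := by
  obtain ⟨u, v, p, hp, hmax⟩ := Walk.exists_isPath_forall_isPath_length_le_length G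
  refine ⟨v, fun w hw w' hw' => ?_⟩
  have on_path : ∀ {x}, G.Adj v x → x = p.penultimate := fun {x} hx => by
    refine h.eq_penultimate_of_adj_end hp hx (not_not.mp fun hx' => ?_)
    have := hmax _ _ _ (hp.concat hx' hx)
    rw [Walk.length_concat] at this
    omega
  exact (on_path hw).trans (on_path hw').symm

theorem IsAcyclic.exists_mem_neighborSet_inter_subsingleton (h : G.IsAcyclic) {s : Set V}
    [Finite s] (hs : s.Nonempty) : ∃ v ∈ s, (G.neighborSet v ∩ s).Subsingleton := by
  have : Nonempty s := hs.to_subtype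
  obtain ⟨⟨v, hv⟩, hsub⟩ := (h.induce s).exists_neighborSet_subsingleton
  refine ⟨v, hv, fun w ⟨hw, hws⟩ w' ⟨hw', hws'⟩ => ?_⟩
  simpa using @hsub ⟨w, hws⟩ (by simpa using hw) ⟨w', hws'⟩ (by simpa using hw')

end SimpleGraph

section TannerGraph

variable {r n : ℕ} {H : Matrix (Fin r) (Fin n) (ZMod 2)}

theorem tanner_adj_inl_inr {i : Fin n} {j : Fin r} :
    (tanner H).Adj (.inl i) (.inr j) ↔ H j i = 1 := by
  simp [tanner]

theorem tanner_adj_inr_inl {i : Fin n} {j : Fin r} :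
    (tanner H).Adj (.inr j) (.inl i) ↔ H j i = 1 := by
  simp [tanner]

variable (H) in
def tannerSupport (g : Fin r → ZMod 2) : Set (Fin n ⊕ Fin r) :=
  {v | Sum.elim (fun i => ∃ j, g j ≠ 0 ∧ H j i = 1) (fun j => g j ≠ 0) v}

variable {g : Fin r → ZMod 2}

theorem nontrivial_neighborSet_inter_tannerSupport_inl (hg : ∑ j, g j • H j = 0) {i : Fin n}
    (hi : .inl i ∈ tannerSupport H g) :
    ((tanner H).neighborSet (.inl i) ∩ tannerSupport H g).Nontrivial := by
  obtain ⟨j, hgj, hji⟩ := hi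
  have hcol : ∑ k, g k * H k i = 0 := by simpa using congrFun hg i
  have hother : ∑ k ∈ univ.erase j, g k * H k i ≠ 0 := by
    rw [sum_erase_eq_sub (mem_univ j), hcol, zero_sub, neg_ne_zero, hji, mul_one]
    exact hgj
  obtain ⟨k, hk, hgk⟩ := exists_ne_zero_of_sum_ne_zero hother
  have hki : H k i = 1 := Fin.eq_one_of_ne_zero _ (right_ne_zero_of_mul hgk)
  refine ⟨.inr j, ⟨tanner_adj_inl_inr.2 hji, hgj⟩, .inr k,
    ⟨tanner_adj_inl_inr.2 hki, left_ne_zero_of_mul hgk⟩, ?_⟩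
  simpa [eq_comm] using ne_of_mem_erase hk

theorem nontrivial_neighborSet_inter_tannerSupport_inr
    (hdeg : ∀ j : Fin r, 2 ≤ (univ.filter (fun i => H j i = 1)).card) {j : Fin r}
    (hj : .inr j ∈ tannerSupport H g) :
    ((tanner H).neighborSet (.inr j) ∩ tannerSupport H g).Nontrivial := by
  obtain ⟨i₁, hi₁, i₂, hi₂, hne⟩ := one_lt_card.1 (hdeg j)
  rw [mem_filter] at hi₁ hi₂
  exact ⟨.inl i₁, ⟨tanner_adj_inr_inl.2 hi₁.2, j, hj, hi₁.2⟩,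
    .inl i₂, ⟨tanner_adj_inr_inl.2 hi₂.2, j, hj, hi₂.2⟩, by simpa using hne⟩

end TannerGraph

/-- if `T(H)` is a tree with all check degrees at least 2, the rows of `H`
are linearly independent over `𝔽₂`. -/
theorem rows_linearIndependent_of_tree {r n : ℕ}
    (H : Matrix (Fin r) (Fin n) (ZMod 2))
    (htree : (tanner H).IsTree)
    (hdeg : ∀ j : Fin r, 2 ≤ (Finset.univ.filter (fun i => H j i = 1)).card) :
    LinearIndependent (ZMod 2) (fun j : Fin r => (H j : Fin n → ZMod 2)) := by
  rw [Fintype.linearIndependent_iff]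
  intro g hg
  by_contra! ⟨j₀, hj₀⟩
  obtain ⟨v, hv, hleaf⟩ := htree.isAcyclic.exists_mem_neighborSet_inter_subsingleton
    (s := tannerSupport H g) ⟨.inr j₀, hj₀⟩
  refine hleaf.not_nontrivial ?_
  cases v with
  | inl i => exact nontrivial_neighborSet_inter_tannerSupport_inl hg hv
  | inr j => exact nontrivial_neighborSet_inter_tannerSupport_inr hdeg hv
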